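/- Suppose Assumption A holds and let φ : ℕ → (0,∞) be an eventually increasing sequence. If limsup_{m→∞} ξ*(T_m)/φ(T_{m−1}) = 0 P_0-almost surely, then limsup_{n→∞} ξ*_n/φ(n) = 0 P_0-almost surely. Similarly, if liminf_{m→∞} ξ*(T_m)/φ(T_{m+1}) = ∞ P_0-almost surely, then liminf_{n→∞} ξ*_n/φ(n) = ∞ P_0-almost surely. -/

import Mathlib

open MeasureTheory ProbabilityTheory Filter Finset

noncomputable section

/-- The space of (raw) cookie environments: `ω z i` is the strength of the `i`-th cookie
at site `z`. -/
abbrev CookieEnv : Type := ℤ → ℕ → ℝ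

/-- The space of paths of a walk on `ℤ`. -/
abbrev WalkPath : Type := ℕ → ℤ

/-- `ω` is a genuine cookie environment with `M` cookies per site: all strengths lie in `[0,1]`
and the strengths of cookies of index `> M` equal `1/2`. -/
def IsCookie (M : ℕ) (ω : CookieEnv) : Prop :=
  ∀ z i, ω z i ∈ Set.Icc (0 : ℝ) 1 ∧ (M < i → ω z i = 1 / 2)

/-- `ξ_n = #{0 ≤ i ≤ n : x i = x n}`, the number of visits to the current site by time `n`. -/
def xiSelf (x : WalkPath) (n : ℕ) : ℕ :=
  ((Finset.range (n + 1)).filter fun i => x i = x n).card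

/-- The occupation time `ξ_n(z) = #{0 ≤ i ≤ n : X i = z}` of site `z` by time `n`. -/
def occTime (X : WalkPath) (n : ℕ) (z : ℤ) : ℕ :=
  ((Finset.range (n + 1)).filter fun i => X i = z).card

/-- `ξ*_n = max_{z ∈ ℤ} ξ_n(z)`, the maximal occupation time of a single site by time `n`. -/
def xiStar (X : WalkPath) (n : ℕ) : ℕ := sSup (Set.range (occTime X n))

/-- The hitting time `T_m = inf{n : X n = m}`. -/
def hitTime (X : WalkPath) (m : ℤ) : ℕ := sInf {n | X n = m}

/-- `D_k^m`: the number of down-crossings from `k` to `k-1` before time `T_m`. -/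
def downCross (X : WalkPath) (m k : ℤ) : ℕ :=
  ((Finset.range (hitTime X m)).filter fun i => X i = k ∧ X (i + 1) = k - 1).card

/-- The annealed expected total drift `δ` of the cookie environment. -/
def erwDelta (M : ℕ) (P : Measure CookieEnv) : ℝ :=
  ∫ ω, (∑ i ∈ Finset.Icc 1 M, (2 * ω 0 i - 1)) ∂P

/-- Assumption A: (a) the piles `(ω_z)_{z ∈ ℤ}` are i.i.d. under `P`; (b) non-degeneracy;
(c) `δ > 1`. -/
def AssumptionA (M : ℕ) (P : Measure CookieEnv) : Prop :=
  iIndepFun (fun z (ω : CookieEnv) => ω z) P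
    ∧ (∀ z : ℤ, IdentDistrib (fun ω : CookieEnv => ω z) (fun ω : CookieEnv => ω 0) P P)
    ∧ 0 < ∫ ω, (∏ i ∈ Finset.Icc 1 M, ω 0 i) ∂P
    ∧ 0 < ∫ ω, (∏ i ∈ Finset.Icc 1 M, (1 - ω 0 i)) ∂P
    ∧ 1 < erwDelta M P

/-- The data of an excited random walk with `M` cookies per site: an environment law `envLaw`
(a probability measure on cookie environments), quenched laws `quenched ω` on the path space
(probability measures satisfying the ERW transition rule with start at `0`), and the annealed
law `annealed = ∫ quenched ω d(envLaw)`. -/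
structure ERWLaw (M : ℕ) where
  envLaw : Measure CookieEnv
  envLaw_prob : IsProbabilityMeasure envLaw
  envLaw_cookie : ∀ᵐ ω ∂envLaw, IsCookie M ω
  quenched : CookieEnv → Measure WalkPath
  quenched_prob : ∀ ω, IsProbabilityMeasure (quenched ω)
  quenched_meas : Measurable quenched
  quenched_start : ∀ᵐ ω ∂envLaw, quenched ω {X : WalkPath | X 0 = 0} = 1
  quenched_up : ∀ᵐ ω ∂envLaw, ∀ (n : ℕ) (x : WalkPath),
    quenched ω {X : WalkPath | (∀ i ≤ n, X i = x i) ∧ X (n + 1) = x n + 1}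
      = ENNReal.ofReal (ω (x n) (xiSelf x n))
          * quenched ω {X : WalkPath | ∀ i ≤ n, X i = x i}
  quenched_down : ∀ᵐ ω ∂envLaw, ∀ (n : ℕ) (x : WalkPath),
    quenched ω {X : WalkPath | (∀ i ≤ n, X i = x i) ∧ X (n + 1) = x n - 1}
      = ENNReal.ofReal (1 - ω (x n) (xiSelf x n))
          * quenched ω {X : WalkPath | ∀ i ≤ n, X i = x i}
  annealed : Measure WalkPath
  annealed_def : ∀ A : Set WalkPath, MeasurableSet A →
    annealed A = ∫⁻ ω, quenched ω A ∂envLaw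

/-- The data of the coin-tossing construction: a probability space `(Ω', P)` carrying an
environment `envOf` with law `envLaw` and coins `coin z i` which are, conditionally on the
environment, independent `±1`-valued with `P(coin z i = 1 | ω) = ω z i`. -/
structure CoinLaw (M : ℕ) (Ω' : Type) [MeasurableSpace Ω'] where
  envLaw : Measure CookieEnv
  envLaw_prob : IsProbabilityMeasure envLaw
  envLaw_cookie : ∀ᵐ ω ∂envLaw, IsCookie M ω
  P : Measure Ω'
  P_prob : IsProbabilityMeasure P
  envOf : Ω' → CookieEnv
  envOf_meas : Measurable envOf
  envOf_law : P.map envOf = envLaw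
  coin : ℤ → ℕ → Ω' → ℤ
  coin_meas : ∀ z i, Measurable (coin z i)
  coin_law : ∀ (F : Finset (ℤ × ℕ)) (s : ℤ × ℕ → Bool) (A : Set CookieEnv),
    MeasurableSet A →
    P {ω' | envOf ω' ∈ A ∧ ∀ p ∈ F, coin p.1 p.2 ω' = (if s p then 1 else -1)}
      = ∫⁻ ω in A, (∏ p ∈ F, ENNReal.ofReal (if s p then ω p.1 p.2 else 1 - ω p.1 p.2)) ∂envLaw

/-- The number of successes (`+1`'s) among the first `n` terms of the coin sequence `b`. -/
def numSucc (b : ℕ → ℤ) (n : ℕ) : ℕ := ((Finset.range n).filter fun i => b i = 1).card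

/-- `F_m`: the number of failures (`-1`'s) before the `m`-th success in the coin sequence `b`. -/
def failuresBefore (b : ℕ → ℤ) (m : ℕ) : ℕ := sInf {n | numSucc b n = m} - m

variable {M : ℕ} {Ω' : Type} [MeasurableSpace Ω']

/-- The branching process `V`: `V 0 = 0`, `V (k+1) = F^{(k)}_{V k + 1}`, where `F^{(z)}_m` is the
number of failures before the `m`-th success in the coin pile `(coin z i)_{i ≥ 1}` at site `z`. -/
def branchV (C : CoinLaw M Ω') (ω' : Ω') : ℕ → ℕ
  | 0 => 0
  | k + 1 => failuresBefore (fun i => C.coin (k : ℤ) (i + 1) ω') (branchV C ω' k + 1)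

/-- `sigmaSeq C ω' k = σ_{k-1}`: `σ_{-1} = 0` and `σ_k = inf{i > σ_{k-1} : V i = 0}`. -/
def sigmaSeq (C : CoinLaw M Ω') (ω' : Ω') : ℕ → ℕ
  | 0 => 0
  | k + 1 => sInf {i | sigmaSeq C ω' k < i ∧ branchV C ω' i = 0}

/-- `ϱ_m = min{k ≥ 0 : σ_k ≥ m}`, the number of renewal epochs completed by generation `m`. -/
def varrho (C : CoinLaw M Ω') (ω' : Ω') (m : ℕ) : ℕ := sInf {k | m ≤ sigmaSeq C ω' (k + 1)}

/-- `S_k = Σ_{i = σ_{k-1}}^{σ_k - 1} V i`, the total population of the `(k+1)`-th life cycle. -/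
def cycleS (C : CoinLaw M Ω') (ω' : Ω') (k : ℕ) : ℕ :=
  ∑ i ∈ Finset.Ico (sigmaSeq C ω' k) (sigmaSeq C ω' (k + 1)), branchV C ω' i

/-- `M_k = max_{σ_{k-1} ≤ i < σ_k} V i`, the most populated generation of the `(k+1)`-th cycle. -/
def cycleMax (C : CoinLaw M Ω') (ω' : Ω') (k : ℕ) : ℕ :=
  (Finset.Ico (sigmaSeq C ω' k) (sigmaSeq C ω' (k + 1))).sup (branchV C ω')

/-- `μ = E_0^V[σ_0]`. -/
def cycleMean (C : CoinLaw M Ω') : ℝ := ∫ ω', (sigmaSeq C ω' 1 : ℝ) ∂C.P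

/-- `a_m^+ = ⌊μ⁻¹ (m + m^{1/δ'})⌋`. -/
def aPlus (μ δ' : ℝ) (m : ℕ) : ℕ := ⌊μ⁻¹ * ((m : ℝ) + (m : ℝ) ^ (1 / δ'))⌋₊

/-- `a_m^- = ⌊μ⁻¹ (m - m^{1/δ'})⌋`. -/
def aMinus (μ δ' : ℝ) (m : ℕ) : ℕ := ⌊μ⁻¹ * ((m : ℝ) - (m : ℝ) ^ (1 / δ'))⌋₊

end

/-! On the block `T_m ≤ n < T_{m+1}` the nondecreasing `ξ*` and the eventually nondecreasing `φ`
give `ξ*(T_m)/φ(T_{m+1}) ≤ ξ*_n/φ(n) ≤ ξ*(T_{m+1})/φ(T_m)`, and the block index `m` tends to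
infinity with `n`. This is pathwise: it holds for every path from `0` with `±1` steps that
reaches every level `m ≥ 0`, and annealed-almost every path starts at `0` and has `±1` steps.
A path that misses a level misses all higher ones, so its hitting times are eventually the junk
value `sInf ∅ = 0` and both ratio sequences are eventually `ξ*_0/φ 0 = 1/φ 0`, which makes
either almost-sure hypothesis fail on it. -/

open Topology

section LimitsInEReal

variable {α : Type*} {l : Filter α} [l.NeBot] {u : α → ℝ}

theorem EReal.limsup_coe_eq_zero_iff (hu : 0 ≤ᶠ[l] u) :
    limsup (fun x => (u x : EReal)) l = 0 ↔ Tendsto u l (𝓝 0) := by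
  refine ⟨fun h => ?_, fun h => (EReal.tendsto_coe.2 h).limsup_eq⟩
  have hinf : liminf (fun x => (u x : EReal)) l = 0 :=
    le_antisymm (h ▸ liminf_le_limsup) <|
      le_liminf_of_le (by isBoundedDefault) (hu.mono fun x hx => by exact_mod_cast hx)
  exact EReal.tendsto_coe.1 <|
    tendsto_of_liminf_eq_limsup hinf h (by isBoundedDefault) (by isBoundedDefault)

theorem EReal.liminf_coe_eq_top_iff :
    liminf (fun x => (u x : EReal)) l = ⊤ ↔ Tendsto u l atTop := by
  refine ⟨fun h => ?_, fun h => (EReal.tendsto_coe_nhds_top_iff.2 h).liminf_eq⟩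
  have hsup : limsup (fun x => (u x : EReal)) l = ⊤ := top_le_iff.1 (h ▸ liminf_le_limsup)
  exact EReal.tendsto_coe_nhds_top_iff.1 <|
    tendsto_of_liminf_eq_limsup h hsup (by isBoundedDefault) (by isBoundedDefault)

end LimitsInEReal

section Blocks

variable {τ : ℕ → ℕ}

def blockIndex (τ : ℕ → ℕ) (n : ℕ) : ℕ := Nat.findGreatest (fun m => τ m ≤ n) n

theorem le_blockIndex (hτ : StrictMono τ) {m n : ℕ} (h : τ m ≤ n) : m ≤ blockIndex τ n :=
  Nat.le_findGreatest ((hτ.id_le m).trans h) h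

theorem apply_blockIndex_le {n : ℕ} (h : τ 0 ≤ n) :
    τ (blockIndex τ n) ≤ n :=
  Nat.findGreatest_spec (P := fun m => τ m ≤ n) (Nat.zero_le n) h

theorem lt_apply_blockIndex_succ (hτ : StrictMono τ) (n : ℕ) :
    n < τ (blockIndex τ n + 1) := by
  by_contra! h
  exact Nat.not_succ_le_self _ (le_blockIndex hτ h)

theorem tendsto_blockIndex (hτ : StrictMono τ) : Tendsto (blockIndex τ) atTop atTop :=
  tendsto_atTop_atTop.2 fun m => ⟨τ m, fun _ h => le_blockIndex hτ h⟩

end Blocks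

section Transfer

variable {τ : ℕ → ℕ} {s φ : ℕ → ℝ} {N : ℕ}

theorem eventually_div_mem_blockBounds (hτ : StrictMono τ) (hs : Monotone s) (hs0 : 0 ≤ s)
    (hφ : ∀ n, 0 < φ n) (hφm : MonotoneOn φ (Set.Ici N)) :
    ∀ᶠ n in atTop,
      s (τ (blockIndex τ n)) / φ (τ (blockIndex τ n + 1)) ≤ s n / φ n ∧
        s n / φ n ≤ s (τ (blockIndex τ n + 1)) / φ (τ (blockIndex τ n)) := by
  filter_upwards [eventually_ge_atTop (τ 0), (tendsto_blockIndex hτ).eventually_ge_atTop N]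
    with n hn hN
  have hlo : τ (blockIndex τ n) ≤ n := apply_blockIndex_le hn
  have hhi : n < τ (blockIndex τ n + 1) := lt_apply_blockIndex_succ hτ n
  have hNlo : N ≤ τ (blockIndex τ n) := hN.trans (hτ.id_le _)
  constructor
  · exact div_le_div₀ (hs0 n) (hs hlo) (hφ _)
      (hφm (hNlo.trans hlo) (hNlo.trans (hlo.trans hhi.le)) hhi.le)
  · exact div_le_div₀ (hs0 _) (hs hhi.le) (hφ _) (hφm hNlo (hNlo.trans hlo) hlo)

theorem tendsto_div_nhds_zero_of_blocks (hτ : StrictMono τ) (hs : Monotone s) (hs0 : 0 ≤ s)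
    (hφ : ∀ n, 0 < φ n) (hφm : MonotoneOn φ (Set.Ici N))
    (h : Tendsto (fun m => s (τ (m + 1)) / φ (τ m)) atTop (𝓝 0)) :
    Tendsto (fun n => s n / φ n) atTop (𝓝 0) :=
  tendsto_of_tendsto_of_tendsto_of_le_of_le' tendsto_const_nhds (h.comp (tendsto_blockIndex hτ))
    (Eventually.of_forall fun n => div_nonneg (hs0 n) (hφ n).le)
    ((eventually_div_mem_blockBounds hτ hs hs0 hφ hφm).mono fun _ h => h.2)

theorem tendsto_div_atTop_of_blocks (hτ : StrictMono τ) (hs : Monotone s) (hs0 : 0 ≤ s)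
    (hφ : ∀ n, 0 < φ n) (hφm : MonotoneOn φ (Set.Ici N))
    (h : Tendsto (fun m => s (τ m) / φ (τ (m + 1))) atTop atTop) :
    Tendsto (fun n => s n / φ n) atTop atTop :=
  tendsto_atTop_mono' atTop
    ((eventually_div_mem_blockBounds hτ hs hs0 hφ hφm).mono fun _ h => h.1)
    (h.comp (tendsto_blockIndex hτ))

end Transfer

section OccupationTimes

variable (X : WalkPath)

theorem occTime_le (n : ℕ) (z : ℤ) : occTime X n z ≤ n + 1 :=
  (card_filter_le _ _).trans (card_range _).le

theorem occTime_mono (z : ℤ) : Monotone fun n => occTime X n z := fun _ _ h =>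
  card_le_card (filter_subset_filter _ (range_subset_range.2 (Nat.succ_le_succ h)))

theorem bddAbove_range_occTime (n : ℕ) : BddAbove (Set.range (occTime X n)) :=
  ⟨n + 1, Set.forall_mem_range.2 (occTime_le X n)⟩

theorem occTime_le_xiStar (n : ℕ) (z : ℤ) : occTime X n z ≤ xiStar X n :=
  le_csSup (bddAbove_range_occTime X n) ⟨z, rfl⟩

theorem xiStar_le_of_forall_occTime_le {n k : ℕ} (h : ∀ z, occTime X n z ≤ k) : xiStar X n ≤ k :=
  csSup_le (Set.range_nonempty _) (Set.forall_mem_range.2 h)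

theorem xiStar_mono : Monotone (xiStar X) := fun _ n' h =>
  xiStar_le_of_forall_occTime_le X fun z => (occTime_mono X z h).trans (occTime_le_xiStar X n' z)

theorem xiStar_zero : xiStar X 0 = 1 := by
  refine le_antisymm (xiStar_le_of_forall_occTime_le X (occTime_le X 0)) ?_
  have h : occTime X 0 (X 0) = 1 := by simp [occTime, range_one, filter_singleton]
  exact h ▸ occTime_le_xiStar X 0 (X 0)

end OccupationTimes

section HittingTimes

variable {X : WalkPath}

theorem apply_hitTime {m : ℤ} (h : ∃ n, X n = m) : X (hitTime X m) = m :=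
  Nat.sInf_mem h

theorem hitTime_eq_zero_of_forall_ne {m : ℤ} (h : ∀ n, X n ≠ m) : hitTime X m = 0 :=
  Nat.sInf_eq_zero.2 (Or.inr (Set.eq_empty_of_forall_notMem h))

variable (hup : ∀ n, X (n + 1) ≤ X n + 1)
include hup

theorem exists_le_apply_eq_of_le_of_le {c : ℤ} (h0 : X 0 ≤ c) :
    ∀ {n : ℕ}, c ≤ X n → ∃ j ≤ n, X j = c
  | 0, hc => ⟨0, le_rfl, le_antisymm h0 hc⟩
  | n + 1, hc => by
    by_cases hcn : c ≤ X n
    · obtain ⟨j, hj, hXj⟩ := exists_le_apply_eq_of_le_of_le h0 hcn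
      exact ⟨j, hj.trans n.le_succ, hXj⟩
    · exact ⟨n + 1, le_rfl, by linarith [hup n]⟩

theorem hitTime_lt_hitTime_add_one {m : ℤ} (h0 : X 0 ≤ m) (h : ∃ n, X n = m + 1) :
    hitTime X m < hitTime X (m + 1) := by
  have hT := apply_hitTime h
  obtain ⟨j, hj, hXj⟩ := exists_le_apply_eq_of_le_of_le hup h0 (hT.ge.trans' (by omega))
  have hjT : j ≠ hitTime X (m + 1) := fun hjT => by rw [hjT, hT] at hXj; omega
  exact (Nat.sInf_le hXj).trans_lt (hj.lt_of_ne hjT)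

variable (hX0 : X 0 = 0)
include hX0

theorem strictMono_hitTime (hall : ∀ m : ℕ, ∃ n, X n = m) :
    StrictMono fun m : ℕ => hitTime X m :=
  strictMono_nat_of_lt_succ fun m => by
    simpa using hitTime_lt_hitTime_add_one hup (by simp [hX0]) (by exact_mod_cast hall (m + 1))

theorem eventually_xiStar_hitTime_div_eq (hmiss : ¬ ∀ m : ℕ, ∃ n, X n = m) (φ : ℕ → ℝ) (j : ℤ) :
    ∀ᶠ m : ℕ in atTop, (xiStar X (hitTime X m) : ℝ) / φ (hitTime X (m + j)) = 1 / φ 0 := by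
  obtain ⟨m₀, hm₀⟩ := not_forall.1 hmiss
  have hzero : ∀ k : ℤ, m₀ ≤ k → hitTime X k = 0 := fun k hk =>
    hitTime_eq_zero_of_forall_ne fun n hn => by
      obtain ⟨i, -, hi⟩ := exists_le_apply_eq_of_le_of_le hup (c := m₀) (by simp [hX0]) (hn ▸ hk)
      exact hm₀ ⟨i, hi⟩
  filter_upwards [eventually_ge_atTop (m₀ + j.natAbs)] with m hm
  rw [hzero m (by omega), hzero (m + j) (by omega), xiStar_zero, Nat.cast_one]

end HittingTimes

section PathwiseTransfer

variable {X : WalkPath} (hup : ∀ n, X (n + 1) ≤ X n + 1) (hX0 : X 0 = 0)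
  {φ : ℕ → ℝ} (hφ : ∀ n, 0 < φ n) {N : ℕ} (hφm : MonotoneOn φ (Set.Ici N))
include hup hX0 hφ hφm

theorem limsup_xiStar_div_eq_zero
    (h : limsup (fun m : ℕ =>
      (((xiStar X (hitTime X m) : ℝ) / φ (hitTime X ((m : ℤ) - 1)) : ℝ) : EReal)) atTop = 0) :
    limsup (fun n : ℕ => (((xiStar X n : ℝ) / φ n : ℝ) : EReal)) atTop = 0 := by
  have hnonneg {s : ℕ → ℕ} {t : ℕ → ℕ} : 0 ≤ᶠ[atTop] fun n => (s n : ℝ) / φ (t n) :=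
    .of_forall fun n => div_nonneg (Nat.cast_nonneg _) (hφ _).le
  replace h := (EReal.limsup_coe_eq_zero_iff hnonneg).1 h
  refine (EReal.limsup_coe_eq_zero_iff (hnonneg (t := id))).2 ?_
  by_cases hall : ∀ m : ℕ, ∃ n, X n = m
  · refine tendsto_div_nhds_zero_of_blocks (strictMono_hitTime hup hX0 hall)
      (Nat.mono_cast.comp (xiStar_mono X)) (fun _ => Nat.cast_nonneg _) hφ hφm ?_
    simpa using (tendsto_add_atTop_iff_nat 1).2 h
  · have hconst := eventually_xiStar_hitTime_div_eq hup hX0 hall φ (-1)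
    simp only [← sub_eq_add_neg] at hconst
    have := tendsto_nhds_unique (h.congr' hconst) tendsto_const_nhds
    exact absurd this (one_div_pos.2 (hφ 0)).ne

theorem liminf_xiStar_div_eq_top
    (h : liminf (fun m : ℕ =>
      (((xiStar X (hitTime X m) : ℝ) / φ (hitTime X ((m : ℤ) + 1)) : ℝ) : EReal)) atTop = ⊤) :
    liminf (fun n : ℕ => (((xiStar X n : ℝ) / φ n : ℝ) : EReal)) atTop = ⊤ := by
  replace h := EReal.liminf_coe_eq_top_iff.1 h
  refine EReal.liminf_coe_eq_top_iff.2 ?_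
  by_cases hall : ∀ m : ℕ, ∃ n, X n = m
  · refine tendsto_div_atTop_of_blocks (strictMono_hitTime hup hX0 hall)
      (Nat.mono_cast.comp (xiStar_mono X)) (fun _ => Nat.cast_nonneg _) hφ hφm ?_
    simpa using h
  · exact absurd (h.congr' (eventually_xiStar_hitTime_div_eq hup hX0 hall φ 1))
      (not_tendsto_const_atTop _ _)

end PathwiseTransfer

section NearestNeighbourSteps

theorem measure_cylinder_diff_steps_eq_zero {μ : Measure WalkPath} [IsFiniteMeasure μ]
    {x : WalkPath} {n : ℕ} {p : ℝ} (hp : p ∈ Set.Icc 0 1)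
    (hup : μ {X | (∀ i ≤ n, X i = x i) ∧ X (n + 1) = x n + 1}
      = ENNReal.ofReal p * μ {X | ∀ i ≤ n, X i = x i})
    (hdown : μ {X | (∀ i ≤ n, X i = x i) ∧ X (n + 1) = x n - 1}
      = ENNReal.ofReal (1 - p) * μ {X | ∀ i ≤ n, X i = x i}) :
    μ ({X | ∀ i ≤ n, X i = x i} \ {X | X (n + 1) = x n + 1 ∨ X (n + 1) = x n - 1}) = 0 := by
  set C := {X : WalkPath | ∀ i ≤ n, X i = x i}
  set S := {X : WalkPath | X (n + 1) = x n + 1 ∨ X (n + 1) = x n - 1}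
  have hsplit : C ∩ S = {X | (∀ i ≤ n, X i = x i) ∧ X (n + 1) = x n + 1}
      ∪ {X | (∀ i ≤ n, X i = x i) ∧ X (n + 1) = x n - 1} := by
    ext X; simp only [C, S, Set.mem_inter_iff, Set.mem_union, Set.mem_ofPred_eq, and_or_left]
  have hdisj : Disjoint {X : WalkPath | (∀ i ≤ n, X i = x i) ∧ X (n + 1) = x n + 1}
      {X | (∀ i ≤ n, X i = x i) ∧ X (n + 1) = x n - 1} :=
    Set.disjoint_left.2 fun X h1 h2 => by linarith [h1.2, h2.2]
  have hCS : μ (C ∩ S) = μ C := by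
    rw [hsplit, measure_union hdisj (by measurability), hup, hdown, ← add_mul,
      ← ENNReal.ofReal_add hp.1 (by linarith [hp.2]), add_sub_cancel, ENNReal.ofReal_one, one_mul]
  have h := measure_inter_add_sdiff (μ := μ) C (t := S) (by measurability)
  rw [hCS] at h
  exact (ENNReal.add_right_inj (measure_ne_top μ C)).1 (h.trans (add_zero _).symm)

variable {M : ℕ} (E : ERWLaw M)

theorem ERWLaw.ae_quenched_step :
    ∀ᵐ ω ∂E.envLaw, ∀ n, ∀ᵐ X ∂E.quenched ω, X (n + 1) = X n + 1 ∨ X (n + 1) = X n - 1 := by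
  filter_upwards [E.envLaw_cookie, E.quenched_up, E.quenched_down] with ω hcook hup hdown n
  have := E.quenched_prob ω
  -- Cylinders of length `n + 1` are indexed by the countable type `Fin (n + 1) → ℤ`.
  let path (v : Fin (n + 1) → ℤ) : WalkPath := fun j => v (Fin.ofNat (n + 1) j)
  have hpath (X : WalkPath) {i : ℕ} (hi : i ≤ n) : path (fun k => X k) i = X i := by
    simp [path, Nat.mod_eq_of_lt (Nat.lt_succ_of_le hi)]
  refine ae_iff.2 (measure_mono_null (t := ⋃ v, {X | ∀ i ≤ n, X i = path v i} \
      {X | X (n + 1) = path v n + 1 ∨ X (n + 1) = path v n - 1}) (fun X hX => ?_)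
    (measure_iUnion_null_iff.2 fun v => measure_cylinder_diff_steps_eq_zero
      (hcook _ _).1 (hup n (path v)) (hdown n (path v))))
  refine Set.mem_iUnion.2 ⟨fun k => X k, fun i hi => (hpath X hi).symm, ?_⟩
  rwa [Set.mem_ofPred_eq, hpath X le_rfl]

theorem ERWLaw.ae_annealed_of_ae_quenched {p : WalkPath → Prop} (hp : MeasurableSet {X | p X})
    (h : ∀ᵐ ω ∂E.envLaw, ∀ᵐ X ∂E.quenched ω, p X) : ∀ᵐ X ∂E.annealed, p X := by
  change E.annealed {X | p X}ᶜ = 0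
  rw [E.annealed_def _ hp.compl]
  exact (lintegral_congr_ae (h.mono fun _ hω => ae_iff.1 hω)).trans lintegral_zero

theorem ERWLaw.ae_annealed_start_and_step :
    ∀ᵐ X ∂E.annealed, X 0 = 0 ∧ ∀ n, X (n + 1) = X n + 1 ∨ X (n + 1) = X n - 1 := by
  have hstart : ∀ᵐ X ∂E.annealed, X 0 = 0 := by
    refine E.ae_annealed_of_ae_quenched (by measurability) ?_
    filter_upwards [E.quenched_start] with ω hω
    have := E.quenched_prob ω
    exact (ae_iff_measure_eq (by measurability)).2 (hω.trans measure_univ.symm)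
  have hstep := fun n => E.ae_annealed_of_ae_quenched (by measurability)
    (E.ae_quenched_step.mono fun _ hω => hω n)
  exact hstart.and (ae_all_iff.2 hstep)

end NearestNeighbourSteps

theorem stmt_12_general (M : ℕ) (E : ERWLaw M)
    (φ : ℕ → ℝ) (hpos : ∀ n, 0 < φ n)
    (hmono : ∃ N : ℕ, ∀ m n : ℕ, N ≤ m → m ≤ n → φ m ≤ φ n) :
    ((∀ᵐ X ∂E.annealed,
        Filter.limsup (fun m : ℕ =>
          (((xiStar X (hitTime X (m : ℤ)) : ℝ) / φ (hitTime X ((m : ℤ) - 1)) : ℝ) : EReal))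
          Filter.atTop = 0) →
      ∀ᵐ X ∂E.annealed,
        Filter.limsup (fun n : ℕ => (((xiStar X n : ℝ) / φ n : ℝ) : EReal))
          Filter.atTop = 0)
    ∧ ((∀ᵐ X ∂E.annealed,
        Filter.liminf (fun m : ℕ =>
          (((xiStar X (hitTime X (m : ℤ)) : ℝ) / φ (hitTime X ((m : ℤ) + 1)) : ℝ) : EReal))
          Filter.atTop = ⊤) →
      ∀ᵐ X ∂E.annealed,
        Filter.liminf (fun n : ℕ => (((xiStar X n : ℝ) / φ n : ℝ) : EReal))
          Filter.atTop = ⊤) := by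
  obtain ⟨N, hN⟩ := hmono
  have hφm : MonotoneOn φ (Set.Ici N) := fun m hm _ _ hmn => hN m _ hm hmn
  have hpaths := E.ae_annealed_start_and_step
  have hup {X : WalkPath} (hstep : ∀ n, X (n + 1) = X n + 1 ∨ X (n + 1) = X n - 1) (n : ℕ) :
      X (n + 1) ≤ X n + 1 := by
    rcases hstep n with h | h <;> omega
  refine ⟨fun h => ?_, fun h => ?_⟩
  · filter_upwards [hpaths, h] with X ⟨hX0, hstep⟩ hX
    exact limsup_xiStar_div_eq_zero (hup hstep) hX0 hpos hφm hX
  · filter_upwards [hpaths, h] with X ⟨hX0, hstep⟩ hX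
    exact liminf_xiStar_div_eq_top (hup hstep) hX0 hpos hφm hX

/-- Under Assumption A, for an eventually increasing `φ : ℕ → (0,∞)`:
if `limsup ξ*(T_m)/φ(T_{m-1}) = 0` a.s. then `limsup ξ*_n/φ(n) = 0` a.s.; and if
`liminf ξ*(T_m)/φ(T_{m+1}) = ∞` a.s. then `liminf ξ*_n/φ(n) = ∞` a.s. -/
theorem stmt_12 (M : ℕ) (E : ERWLaw M) (hA : AssumptionA M E.envLaw)
    (φ : ℕ → ℝ) (hpos : ∀ n, 0 < φ n)
    (hmono : ∃ N : ℕ, ∀ m n : ℕ, N ≤ m → m ≤ n → φ m ≤ φ n) :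
    ((∀ᵐ X ∂E.annealed,
        Filter.limsup (fun m : ℕ =>
          (((xiStar X (hitTime X (m : ℤ)) : ℝ) / φ (hitTime X ((m : ℤ) - 1)) : ℝ) : EReal))
          Filter.atTop = 0) →
      ∀ᵐ X ∂E.annealed,
        Filter.limsup (fun n : ℕ => (((xiStar X n : ℝ) / φ n : ℝ) : EReal))
          Filter.atTop = 0)
    ∧ ((∀ᵐ X ∂E.annealed,
        Filter.liminf (fun m : ℕ =>
          (((xiStar X (hitTime X (m : ℤ)) : ℝ) / φ (hitTime X ((m : ℤ) + 1)) : ℝ) : EReal))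
          Filter.atTop = ⊤) →
      ∀ᵐ X ∂E.annealed,
        Filter.liminf (fun n : ℕ => (((xiStar X n : ℝ) / φ n : ℝ) : EReal))
          Filter.atTop = ⊤) :=
  stmt_12_general M E φ hpos hmono
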